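/- For Burgers' equation with smooth solution, the exact flux identity holds: if q is a C¹ solution of q_t + (q²/2)_x = 0 on [t^n, t^{n+1}], constant along the straight characteristic from (x^L, t^n) to (x, t^{n+1}) with x^L = x - q(x,t^{n+1})Δt, then ∫_{t^n}^{t^{n+1}} q(x,t)²/2 dt = ∫_{x^L}^{x} q(ξ,t^n) dξ - (Δt/2) q(x^L, t^n)² (case x^L ≤ x). -/

import Mathlib

set_option maxHeartbeats 1000000

theorem stmt_16 (tn tn1 : ℝ) (hΔt : tn < tn1)
    (q : ℝ → ℝ → ℝ)
    (hq : ContDiff ℝ 1 (fun p : ℝ × ℝ => q p.1 p.2))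
    (hpde : ∀ ξ : ℝ, ∀ τ ∈ Set.Icc tn tn1,
      deriv (fun t => q ξ t) τ + q ξ τ * deriv (fun y => q y τ) ξ = 0)
    (x xL : ℝ) (hpos : 0 < q x tn1)
    (hxL : xL = x - q x tn1 * (tn1 - tn))
    (hchar : ∀ s ∈ Set.Icc tn tn1,
      q (x - q x tn1 * (tn1 - s)) s = q x tn1) :
    ∫ t in tn..tn1, (q x t) ^ 2 / 2 =
      (∫ ξ in xL..x, q ξ tn) - (tn1 - tn) / 2 * (q xL tn) ^ 2 := by
  set Q : ℝ × ℝ → ℝ := fun p => q p.1 p.2 with hQdef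
  have hQd : Differentiable ℝ Q := hq.differentiable one_ne_zero
  have hQc : Continuous Q := hq.continuous
  have hfc : Continuous (fderiv ℝ Q) := hq.continuous_fderiv one_ne_zero
  set c : ℝ := q x tn1 with hc
  set a : ℝ → ℝ := fun s => x - c * (tn1 - s) with ha
  -- partial derivative facts
  have ht : ∀ ξ s, HasDerivAt (fun s' => q ξ s') (fderiv ℝ Q (ξ, s) (0, 1)) s := by
    intro ξ s
    have h1 : HasDerivAt (fun s' : ℝ => ((ξ, s') : ℝ × ℝ)) (0, 1) s :=
      (hasDerivAt_const s ξ).prodMk (hasDerivAt_id s)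
    exact ((hQd (ξ, s)).hasFDerivAt).comp_hasDerivAt s h1
  have hx : ∀ ξ s, HasDerivAt (fun y => q y s) (fderiv ℝ Q (ξ, s) (1, 0)) ξ := by
    intro ξ s
    have h1 : HasDerivAt (fun y : ℝ => ((y, s) : ℝ × ℝ)) (1, 0) ξ :=
      (hasDerivAt_id ξ).prodMk (hasDerivAt_const ξ s)
    exact ((hQd (ξ, s)).hasFDerivAt).comp_hasDerivAt ξ h1
  have hcont1 : ∀ s, Continuous fun ξ => q ξ s := fun s =>
    hQc.comp (continuous_id.prodMk continuous_const)
  have hcont2 : ∀ ξ, Continuous fun s => q ξ s := fun ξ =>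
    hQc.comp (continuous_const.prodMk continuous_id)
  have hint : ∀ s u v : ℝ, IntervalIntegrable (fun ξ => q ξ s) MeasureTheory.volume u v :=
    fun s u v => (hcont1 s).intervalIntegrable u v
  set F : ℝ → ℝ := fun s => ∫ ξ in a s..x, q ξ s with hF
  -- main derivative claim
  have key : ∀ t ∈ Set.Icc tn tn1,
      HasDerivAt F (-(q x t) ^ 2 / 2 - c ^ 2 / 2) t := by
    intro t htmem
    have hqat : q (a t) t = c := hchar t htmem
    -- (i) differentiation under the integral
    obtain ⟨M, hM⟩ : ∃ M, ∀ p ∈ (Set.uIcc (a t) x) ×ˢ (Metric.closedBall t 1),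
        ‖fderiv ℝ Q p‖ ≤ M :=
      (isCompact_uIcc.prod (isCompact_closedBall t 1)).exists_bound_of_continuousOn
        hfc.continuousOn
    have hG : HasDerivAt (fun s => ∫ ξ in a t..x, q ξ s)
        (∫ ξ in a t..x, fderiv ℝ Q (ξ, t) (0, 1)) t := by
      have hmain := intervalIntegral.hasDerivAt_integral_of_dominated_loc_of_deriv_le
        (F := fun s ξ => q ξ s) (F' := fun s ξ => fderiv ℝ Q (ξ, s) (0, 1))
        (x₀ := t) (a := a t) (b := x) (μ := MeasureTheory.volume)
        (bound := fun _ => M) (Metric.ball_mem_nhds t one_pos)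
        (Filter.Eventually.of_forall fun s => ((hcont1 s).aestronglyMeasurable))
        (hint t (a t) x)
        ((((hfc.comp (continuous_id.prodMk continuous_const)).clm_apply
          continuous_const)).aestronglyMeasurable)
        ?_ (intervalIntegrable_const) ?_
      · exact hmain.2
      · refine Filter.Eventually.of_forall fun ξ hξ => fun s hs => ?_
        have hp : ((ξ, s) : ℝ × ℝ) ∈ (Set.uIcc (a t) x) ×ˢ (Metric.closedBall t 1) := by
          constructor
          · exact Set.uIoc_subset_uIcc hξ
          · exact Metric.ball_subset_closedBall hs
        calc ‖fderiv ℝ Q (ξ, s) (0, 1)‖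
            ≤ ‖fderiv ℝ Q (ξ, s)‖ * ‖((0 : ℝ), (1 : ℝ))‖ :=
              ContinuousLinearMap.le_opNorm _ _
          _ ≤ M * 1 := by
              apply mul_le_mul (hM _ hp) _ (norm_nonneg _)
                (le_trans (norm_nonneg _) (hM _ hp))
              rw [Prod.norm_def]
              simp
          _ = M := mul_one M
      · exact Filter.Eventually.of_forall fun ξ _ s _ => ht ξ s
    -- (ii) moving endpoint
    have hH : HasDerivAt (fun s => ∫ ξ in a t..a s, q ξ s) (c * c) t := by
      rw [hasDerivAt_iff_isLittleO]
      rw [Asymptotics.isLittleO_iff]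
      intro ε hε
      have hcpos : 0 < c := hpos
      have hε' : 0 < ε / (c + 1) := div_pos hε (by linarith)
      obtain ⟨δ, hδpos, hδ⟩ := Metric.continuousAt_iff.mp (hQc.continuousAt (x := (a t, t)))
        (ε / (c + 1)) hε'
      have hmem : Metric.ball t (δ / (c + 1)) ∈ nhds t :=
        Metric.ball_mem_nhds t (div_pos hδpos (by linarith))
      filter_upwards [hmem] with s hs
      rw [Metric.mem_ball, Real.dist_eq] at hs
      have hast : a s - a t = c * (s - t) := by simp [ha]; ring
      have hsimple : ∫ ξ in a t..a t, q ξ t = 0 := intervalIntegral.integral_same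
      have hconst : (s - t) • (c * c) = ∫ ξ in a t..a s, c := by
        rw [intervalIntegral.integral_const, hast]
        simp [smul_eq_mul]; ring
      rw [hsimple, hconst, sub_zero]
      rw [← intervalIntegral.integral_sub (hint s (a t) (a s)) intervalIntegrable_const]
      have habs : |a s - a t| = c * |s - t| := by
        rw [hast, abs_mul, abs_of_pos hcpos]
      have hcd : c * |s - t| < δ := by
        have h1 : c * |s - t| ≤ c * (δ / (c + 1)) :=
          mul_le_mul_of_nonneg_left (le_of_lt hs) (le_of_lt hcpos)
        have h2 : c * (δ / (c + 1)) < δ := by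
          rw [← mul_div_assoc, div_lt_iff₀ (by linarith : (0:ℝ) < c + 1)]
          nlinarith
        linarith
      have hbd : ∀ ξ ∈ Set.uIoc (a t) (a s), ‖q ξ s - c‖ ≤ ε / (c + 1) := by
        intro ξ hξ
        have hξ' : |ξ - a t| ≤ |a s - a t| := by
          rcases Set.mem_uIoc.mp hξ with h | h
          · rw [abs_of_nonneg (by linarith [h.1])]
            calc ξ - a t ≤ a s - a t := by linarith [h.2]
              _ ≤ |a s - a t| := le_abs_self _
          · rw [abs_of_nonpos (by linarith [h.2])]
            calc -(ξ - a t) = a t - ξ := by ring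
              _ ≤ a t - a s := by linarith [h.1]
              _ ≤ |a s - a t| := by rw [abs_sub_comm]; exact le_abs_self _
        have hdist : dist ((ξ, s) : ℝ × ℝ) ((a t, t) : ℝ × ℝ) < δ := by
          rw [Prod.dist_eq]
          apply max_lt
          · rw [Real.dist_eq]
            calc |ξ - a t| ≤ |a s - a t| := hξ'
              _ = c * |s - t| := habs
              _ < δ := hcd
          · rw [Real.dist_eq]
            calc |s - t| < δ / (c + 1) := hs
              _ ≤ δ := by
                rw [div_le_iff₀ (by linarith : (0:ℝ) < c + 1)]
                nlinarith
        have := hδ hdist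
        rw [Real.dist_eq] at this
        have hQeq : Q (ξ, s) = q ξ s := rfl
        have hQeq2 : Q (a t, t) = q (a t) t := rfl
        rw [hQeq, hQeq2, hqat] at this
        exact le_of_lt this
      calc ‖∫ ξ in a t..a s, (q ξ s - c)‖ ≤ (ε / (c + 1)) * |a s - a t| :=
            intervalIntegral.norm_integral_le_of_norm_le_const hbd
        _ = (ε / (c + 1)) * (c * |s - t|) := by rw [habs]
        _ ≤ ε * |s - t| := by
            have h3 : (ε / (c + 1)) * c ≤ ε := by
              rw [div_mul_eq_mul_div, div_le_iff₀ (by linarith : (0:ℝ) < c + 1)]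
              nlinarith
            calc (ε / (c + 1)) * (c * |s - t|) = ((ε / (c + 1)) * c) * |s - t| := by ring
              _ ≤ ε * |s - t| := mul_le_mul_of_nonneg_right h3 (abs_nonneg _)
        _ = ε * ‖s - t‖ := by rw [Real.norm_eq_abs]
    -- combine G and H
    have hsplit : ∀ s, F s = (∫ ξ in a t..x, q ξ s) - ∫ ξ in a t..a s, q ξ s := by
      intro s
      have hadd := intervalIntegral.integral_add_adjacent_intervals
        (hint s (a t) (a s)) (hint s (a s) x)
      simp only [hF]
      linarith [hadd]
    have hFd : HasDerivAt F ((∫ ξ in a t..x, fderiv ℝ Q (ξ, t) (0, 1)) - c * c) t := by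
      have h := hG.sub hH
      exact h.congr_of_eventuallyEq (Filter.Eventually.of_forall fun s => hsplit s)
    -- evaluate the integral of the t-partial using the PDE
    have hval : (∫ ξ in a t..x, fderiv ℝ Q (ξ, t) (0, 1))
        = -((q x t) ^ 2 / 2 - c ^ 2 / 2) := by
      have hpt : ∀ ξ, fderiv ℝ Q (ξ, t) (0, 1) = -(q ξ t * fderiv ℝ Q (ξ, t) (1, 0)) := by
        intro ξ
        have h1 := (ht ξ t).deriv
        have h2 := (hx ξ t).deriv
        have h3 := hpde ξ t htmem
        rw [h1] at h3
        rw [h2] at h3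
        linarith
      have hprim : ∀ ξ, HasDerivAt (fun y => (q y t) ^ 2 / 2)
          (q ξ t * fderiv ℝ Q (ξ, t) (1, 0)) ξ := by
        intro ξ
        have h := ((hx ξ t).pow 2).div_const 2
        refine h.congr_deriv ?_
        push_cast
        ring
      have hcontd : Continuous fun ξ => q ξ t * fderiv ℝ Q (ξ, t) (1, 0) :=
        (hcont1 t).mul ((hfc.comp (continuous_id.prodMk continuous_const)).clm_apply
          continuous_const)
      have hftc : ∫ ξ in a t..x, q ξ t * fderiv ℝ Q (ξ, t) (1, 0)
          = (q x t) ^ 2 / 2 - (q (a t) t) ^ 2 / 2 :=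
        intervalIntegral.integral_eq_sub_of_hasDerivAt (fun ξ _ => hprim ξ)
          (hcontd.intervalIntegrable _ _)
      calc (∫ ξ in a t..x, fderiv ℝ Q (ξ, t) (0, 1))
          = ∫ ξ in a t..x, -(q ξ t * fderiv ℝ Q (ξ, t) (1, 0)) := by
            apply intervalIntegral.integral_congr
            intro ξ _
            exact hpt ξ
        _ = -∫ ξ in a t..x, q ξ t * fderiv ℝ Q (ξ, t) (1, 0) :=
            intervalIntegral.integral_neg
        _ = -((q x t) ^ 2 / 2 - c ^ 2 / 2) := by rw [hftc, hqat]
    have : (∫ ξ in a t..x, fderiv ℝ Q (ξ, t) (0, 1)) - c * c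
        = -(q x t) ^ 2 / 2 - c ^ 2 / 2 := by
      rw [hval]; ring
    rwa [this] at hFd
  -- FTC in time
  have hintF' : IntervalIntegrable (fun t => -(q x t) ^ 2 / 2 - c ^ 2 / 2)
      MeasureTheory.volume tn tn1 := by
    apply Continuous.intervalIntegrable
    fun_prop
  have hftc2 : ∫ t in tn..tn1, (-(q x t) ^ 2 / 2 - c ^ 2 / 2) = F tn1 - F tn := by
    apply intervalIntegral.integral_eq_sub_of_hasDerivAt _ hintF'
    intro t htmem
    apply key
    rwa [Set.uIcc_of_le (le_of_lt hΔt)] at htmem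
  have hFtn1 : F tn1 = 0 := by
    have : a tn1 = x := by simp [ha]
    simp [hF, this]
  have hFtn : F tn = ∫ ξ in xL..x, q ξ tn := by
    simp only [hF]
    rw [hxL]
  have hqxL : q xL tn = c := by
    have := hchar tn ⟨le_rfl, le_of_lt hΔt⟩
    rwa [← hxL] at this
  have hsplit2 : ∫ t in tn..tn1, (-(q x t) ^ 2 / 2 - c ^ 2 / 2)
      = (∫ t in tn..tn1, -(q x t) ^ 2 / 2) - ∫ t in tn..tn1, (c ^ 2 / 2 : ℝ) := by
    apply intervalIntegral.integral_sub
    · apply Continuous.intervalIntegrable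
      fun_prop
    · exact intervalIntegrable_const
  have hneg : ∫ t in tn..tn1, -(q x t) ^ 2 / 2
      = -∫ t in tn..tn1, (q x t) ^ 2 / 2 := by
    rw [← intervalIntegral.integral_neg]
    apply intervalIntegral.integral_congr
    intro t _
    ring
  have hconst2 : ∫ t in tn..tn1, (c ^ 2 / 2 : ℝ) = (tn1 - tn) * (c ^ 2 / 2) := by
    rw [intervalIntegral.integral_const]
    simp [smul_eq_mul]
  rw [hsplit2, hneg, hconst2, hFtn1, hFtn] at hftc2
  rw [hqxL]
  linarith
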